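/- arXiv:2005.09809 — 5 statements merged into one kernel-verified Lean document; each statement's English description precedes it below -/
import Mathlib

section
/- Let $x_1,\dots,x_n$ be the roots of a monic degree-$n$ polynomial $p_n$ and $r_1,\dots,r_\ell$ the roots (with multiplicity) of $p_n^{(n-\ell)}$, where $2 \le \ell \le n$. Then $\frac{1}{n^2(n-1)} \sum_{1 \le i < j \le n} (x_i - x_j)^2 = \frac{1}{\ell^2(\ell-1)} \sum_{1 \le i < j \le \ell} (r_i - r_j)^2$. -/
/-!
Writing `e k` for the `k`-th elementary symmetric function of the roots,
`(n ^ 2 * (n - 1))⁻¹ * ∑_{i < j} (x i - x j) ^ 2 = (e 1 / n.choose 1) ^ 2 - e 2 / n.choose 2`.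
Up to sign `e k` is the coefficient of `X ^ (n - k)` in `p_n`, and differentiating `n - ℓ` times
turns it into the coefficient of `X ^ (ℓ - k)` multiplied by `(n - k)! / (ℓ - k)!`. Relative to
the new leading coefficient `n! / ℓ!` this factor is `ℓ.choose k / n.choose k`, so the normalised
functions `e k / n.choose k` are the same for the roots of `p_n` and of `p_n^(n - ℓ)`.
-/

open Polynomial Finset

theorem Finset.sum_eq_sum_filter_lt_add_swap_add_sum_diag {ι M : Type*} [Fintype ι]
    [LinearOrder ι] [AddCommMonoid M] (f : ι × ι → M) :
    ∑ p, f p = ∑ p : ι × ι with p.1 < p.2, (f p + f p.swap) + ∑ i, f (i, i) := by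
  have hgt : ∑ p : ι × ι with p.2 < p.1, f p = ∑ p : ι × ι with p.1 < p.2, f p.swap :=
    sum_nbij' Prod.swap Prod.swap (by simp) (by simp) (by simp) (by simp) (by simp)
  have hdiag : ∑ p : ι × ι with p.1 = p.2, f p = ∑ i, f (i, i) :=
    sum_nbij' Prod.fst (fun i => (i, i)) (by simp) (by simp) (by aesop) (by simp) (by aesop)
  rw [sum_add_distrib, ← hgt, ← hdiag,
    ← sum_filter_add_sum_filter_not univ (fun p : ι × ι => p.1 < p.2),
    ← sum_filter_add_sum_filter_not (univ.filter fun p : ι × ι => ¬ p.1 < p.2) (fun p => p.2 < p.1),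
    filter_filter, filter_filter, add_assoc]
  congr 3 <;> ext p <;> simp only [mem_filter, mem_univ, true_and]
  · exact ⟨fun h => h.2, fun h => ⟨h.not_gt, h⟩⟩
  · exact ⟨fun h => le_antisymm (not_lt.1 h.2) (not_lt.1 h.1), fun h => by simp [h]⟩

theorem Multiset.esymm_one {R : Type*} [CommSemiring R] (s : Multiset R) : s.esymm 1 = s.sum := by
  simp [Multiset.esymm, Multiset.powersetCard_one]

theorem Finset.esymm_map_val_two_eq_sum_filter_lt {ι R : Type*} [Fintype ι] [LinearOrder ι]
    [CommSemiring R] (y : ι → R) :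
    (univ.val.map y).esymm 2 = ∑ p : ι × ι with p.1 < p.2, y p.1 * y p.2 := by
  rw [esymm_map_val]
  symm
  refine sum_bij (fun p _ => {p.1, p.2}) ?_ ?_ ?_ ?_
  · rintro ⟨a, b⟩ h
    simp only [mem_filter, mem_univ, true_and] at h
    simp [mem_powersetCard, card_pair h.ne]
  · rintro ⟨a, b⟩ h ⟨c, d⟩ h' e
    simp only [mem_filter, mem_univ, true_and] at h h'
    have e' := congrArg ((↑) : Finset ι → Set ι) e
    push_cast at e'
    rcases Set.pair_eq_pair_iff.mp e' with ⟨rfl, rfl⟩ | ⟨rfl, rfl⟩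
    · rfl
    · exact absurd h h'.asymm
  · intro t ht
    obtain ⟨a, b, hab, rfl⟩ := card_eq_two.mp (mem_powersetCard.mp ht).2
    rcases hab.lt_or_gt with h | h
    · exact ⟨(a, b), by simpa using h, rfl⟩
    · exact ⟨(b, a), by simpa using h, pair_comm b a⟩
  · rintro ⟨a, b⟩ h
    simp only [mem_filter, mem_univ, true_and] at h
    simp [prod_pair h.ne]

theorem Finset.sum_filter_lt_sub_sq {ι R : Type*} [Fintype ι] [LinearOrder ι] [CommRing R]
    (y : ι → R) :
    ∑ p : ι × ι with p.1 < p.2, (y p.1 - y p.2) ^ 2 =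
      (Fintype.card ι - 1) * (univ.val.map y).esymm 1 ^ 2 -
        2 * Fintype.card ι * (univ.val.map y).esymm 2 := by
  have hsq : ∑ p : ι × ι with p.1 < p.2, (y p.1 ^ 2 + y p.2 ^ 2) =
      (Fintype.card ι - 1) * ∑ i, y i ^ 2 := by
    have hsplit := sum_eq_sum_filter_lt_add_swap_add_sum_diag fun p : ι × ι => y p.1 ^ 2
    simp only [Fintype.sum_prod_type, sum_const, card_univ, nsmul_eq_mul, Prod.fst_swap,
      ← mul_sum] at hsplit
    linear_combination -hsplit
  have hmul : (∑ i, y i) ^ 2 =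
      2 * ∑ p : ι × ι with p.1 < p.2, y p.1 * y p.2 + ∑ i, y i ^ 2 := by
    have hsplit := sum_eq_sum_filter_lt_add_swap_add_sum_diag fun p : ι × ι => y p.1 * y p.2
    simp only [Fintype.sum_prod_type, Prod.fst_swap, Prod.snd_swap,
      mul_comm (y (Prod.snd _)), ← two_mul, ← mul_sum, ← sum_mul, ← sq] at hsplit
    linear_combination hsplit
  rw [Multiset.esymm_one, esymm_map_val_two_eq_sum_filter_lt, Finset.sum_map_val]
  calc ∑ p : ι × ι with p.1 < p.2, (y p.1 - y p.2) ^ 2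
      = ∑ p : ι × ι with p.1 < p.2, (y p.1 ^ 2 + y p.2 ^ 2) -
          2 * ∑ p : ι × ι with p.1 < p.2, y p.1 * y p.2 := by
        rw [mul_sum, ← sum_sub_distrib]
        exact sum_congr rfl fun _ _ => by ring
    _ = _ := by linear_combination hsq - (Fintype.card ι - 1 : R) * hmul

theorem Finset.one_div_mul_sum_filter_lt_sub_sq {ι K : Type*} [Fintype ι] [LinearOrder ι]
    [Field K] [CharZero K] (y : ι → K) (hι : 2 ≤ Fintype.card ι) :
    1 / ((Fintype.card ι : K) ^ 2 * (Fintype.card ι - 1)) *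
        ∑ p : ι × ι with p.1 < p.2, (y p.1 - y p.2) ^ 2 =
      ((univ.val.map y).esymm 1 / (Fintype.card ι).choose 1) ^ 2 -
        (univ.val.map y).esymm 2 / (Fintype.card ι).choose 2 := by
  have hm : (Fintype.card ι : K) ≠ 0 := by norm_cast; omega
  have hm1 : (Fintype.card ι : K) - 1 ≠ 0 := by
    rw [sub_ne_zero]; norm_cast; omega
  rw [sum_filter_lt_sub_sq, Nat.choose_one_right, Nat.cast_choose_two]
  field_simp

theorem Nat.choose_mul_descFactorial_sub {n ℓ i : ℕ} (hiℓ : i ≤ ℓ) (hℓn : ℓ ≤ n) :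
    n.choose i * (n - i).descFactorial (n - ℓ) = ℓ.choose i * n.descFactorial (n - ℓ) := by
  rw [descFactorial_eq_factorial_mul_choose, descFactorial_eq_factorial_mul_choose,
    choose_symm_of_eq_add (show n - i = (n - ℓ) + (ℓ - i) by omega), choose_symm hℓn,
    mul_left_comm, ← choose_mul hiℓ]
  ring

theorem Polynomial.choose_mul_coeff_eq_of_iterate_derivative_eq {R : Type*} [CommRing R]
    [IsDomain R] [CharZero R] {p q : R[X]} {n ℓ i : ℕ} (hiℓ : i ≤ ℓ) (hℓn : ℓ ≤ n)
    (h : derivative^[n - ℓ] p = C (n.descFactorial (n - ℓ) : R) * q) :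
    (ℓ.choose i : R) * p.coeff (n - i) = n.choose i * q.coeff (ℓ - i) := by
  have hcoeff := congrArg (coeff · (ℓ - i)) h
  simp only [coeff_iterate_derivative, coeff_C_mul, nsmul_eq_mul] at hcoeff
  rw [show ℓ - i + (n - ℓ) = n - i by omega] at hcoeff
  have hfac : ((n.choose i * (n - i).descFactorial (n - ℓ) : ℕ) : R) =
      (ℓ.choose i * n.descFactorial (n - ℓ) : ℕ) := by
    rw [Nat.choose_mul_descFactorial_sub hiℓ hℓn]
  push_cast at hfac
  have hD : (n.descFactorial (n - ℓ) : R) ≠ 0 := by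
    rw [Nat.cast_ne_zero, ne_eq, Nat.descFactorial_eq_zero_iff_lt]
    omega
  refine mul_left_cancel₀ hD ?_
  linear_combination n.choose i * hcoeff - p.coeff (n - i) * hfac

theorem Multiset.esymm_div_choose_eq_of_iterate_derivative {K : Type*} [Field K] [CharZero K]
    {s t : Multiset K} (hts : card t ≤ card s)
    (h : derivative^[card s - card t] (s.map (X - C ·)).prod =
      C ((card s).descFactorial (card s - card t) : K) * (t.map (X - C ·)).prod)
    (i : ℕ) (hi : i ≤ card t) :
    t.esymm i / (card t).choose i = s.esymm i / (card s).choose i := by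
  have hcoeff := choose_mul_coeff_eq_of_iterate_derivative_eq hi hts h
  rw [prod_X_sub_C_coeff s (Nat.sub_le _ _), prod_X_sub_C_coeff t (Nat.sub_le _ _),
    Nat.sub_sub_self (hi.trans hts), Nat.sub_sub_self hi] at hcoeff
  have hchoose : ∀ {m}, i ≤ m → (m.choose i : K) ≠ 0 := fun him =>
    Nat.cast_ne_zero.2 (Nat.choose_pos him).ne'
  rw [div_eq_div_iff (hchoose hi) (hchoose (hi.trans hts))]
  refine mul_left_cancel₀ (pow_ne_zero i (neg_ne_zero.2 one_ne_zero) : (-1 : K) ^ i ≠ 0) ?_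
  linear_combination -hcoeff

theorem variance_conservation_law
    (n ℓ : ℕ) (hℓ2 : 2 ≤ ℓ) (hℓn : ℓ ≤ n)
    (x : Fin n → ℂ) (r : Fin ℓ → ℂ)
    (hroots : (Polynomial.derivative)^[n - ℓ] (∏ i : Fin n, (X - C (x i))) =
      C (((n.factorial / ℓ.factorial : ℕ) : ℂ)) * ∏ i : Fin ℓ, (X - C (r i))) :
    (1 / ((n : ℂ) ^ 2 * (n - 1))) *
        ∑ p ∈ Finset.univ.filter (fun p : Fin n × Fin n => p.1 < p.2), (x p.1 - x p.2) ^ 2 =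
      (1 / ((ℓ : ℂ) ^ 2 * (ℓ - 1))) *
        ∑ p ∈ Finset.univ.filter (fun p : Fin ℓ × Fin ℓ => p.1 < p.2), (r p.1 - r p.2) ^ 2 := by
  have hprod : ∀ {m} (y : Fin m → ℂ), ∏ i, (X - C (y i)) = ((univ.val.map y).map (X - C ·)).prod :=
    fun y => by rw [Multiset.map_map, prod_map_val]; rfl
  have hfac : n.factorial / ℓ.factorial = n.descFactorial (n - ℓ) := by
    rw [Nat.descFactorial_eq_div (Nat.sub_le n ℓ), Nat.sub_sub_self hℓn]
  have hs : Multiset.card (univ.val.map x) = n := by simp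
  have ht : Multiset.card (univ.val.map r) = ℓ := by simp
  have hconserved := Multiset.esymm_div_choose_eq_of_iterate_derivative (hs ▸ ht ▸ hℓn)
    (by rw [hs, ht, ← hprod, ← hprod, ← hfac]; exact hroots)
  have hx := one_div_mul_sum_filter_lt_sub_sq x (by simpa using hℓ2.trans hℓn)
  have hr := one_div_mul_sum_filter_lt_sub_sq r (by simpa using hℓ2)
  simp only [Fintype.card_fin, hs, ht] at hx hr hconserved
  rw [hx, hr, hconserved 1 (by omega), hconserved 2 hℓ2]
end

section
/- Fix $\ell \in \mathbb{N}$ and $a > 0$. For $f_n(y) = e^{y^2}(1 - y^2/n)^n$, there exists a constant $c_{\ell,a}$ such that for all $n \ge 1$ (with $\ell \ge 1$) and all $|y| \le a$ with $a^2 < n$, $|f_n^{(\ell)}(y)| \le c_{\ell,a}/n$. -/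
/-! For `fₙ(y) = e^{y²}(1 - y²/n)ⁿ` one has `fₙ' = n⁻¹ · p · gₙ,ₙ₋₁` with `p(y) = -2y³e^{y²}` and
`g_{s,m}(y) = (1 - y²/s)ᵐ`, so `fₙ^{(ℓ)}` is `n⁻¹` times the `(ℓ-1)`-st derivative of `p · gₙ,ₙ₋₁`.
By Leibniz' rule it suffices that all derivatives of `g_{s,m}` are bounded on `[-a, a]` uniformly
in `m ≤ s`, `a² ≤ s`. This follows by induction on the order from `|g_{s,m}| ≤ 1` and
`g_{s,m}' = -(2m/s) · y · g_{s,m-1}`, whose coefficient has `|2m/s| ≤ 2`. -/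

open Set
open scoped ContDiff

theorem iteratedDeriv_fun_id_mul {𝕜 : Type*} [NontriviallyNormedField 𝕜] {g : 𝕜 → 𝕜} {j : ℕ}
    {y : 𝕜} (hg : ContDiffAt 𝕜 j g y) :
    iteratedDeriv j (fun t => t * g t) y =
      y * iteratedDeriv j g y + j * iteratedDeriv (j - 1) g y := by
  rw [iteratedDeriv_fun_mul (f := fun t => t) contDiffAt_id hg]
  rcases j with _ | j
  · simp
  · rw [Finset.sum_range_succ', Finset.sum_range_succ']
    simp [iteratedDeriv_fun_id, add_comm]

def IteratedDerivsUniformlyBoundedOn {ι : Type*} (F : ι → ℝ → ℝ) (s : Set ℝ) : Prop :=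
  ∀ j : ℕ, ∃ C : ℝ, ∀ i, ∀ y ∈ s, |iteratedDeriv j (F i) y| ≤ C

namespace IteratedDerivsUniformlyBoundedOn

variable {ι : Type*} {F G : ι → ℝ → ℝ} {s : Set ℝ}

theorem const {f : ℝ → ℝ} (hf : ContDiff ℝ ∞ f) (hs : IsCompact s) :
    IteratedDerivsUniformlyBoundedOn (fun _ : ι => f) s := fun j =>
  (hs.exists_bound_of_continuousOn
    (hf.continuous_iteratedDeriv j (by exact_mod_cast le_top)).continuousOn).imp fun _ hC _ => hC

theorem mul (hF : IteratedDerivsUniformlyBoundedOn F s) (hG : IteratedDerivsUniformlyBoundedOn G s)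
    (hFs : ∀ i, ContDiff ℝ ∞ (F i)) (hGs : ∀ i, ContDiff ℝ ∞ (G i)) :
    IteratedDerivsUniformlyBoundedOn (fun i t => F i t * G i t) s := by
  intro j
  choose CF hCF using hF
  choose CG hCG using hG
  refine ⟨∑ k ∈ Finset.range (j + 1), j.choose k * CF k * CG (j - k), fun i y hy => ?_⟩
  rw [iteratedDeriv_fun_mul ((hFs i).contDiffAt.of_le (by exact_mod_cast le_top))
    ((hGs i).contDiffAt.of_le (by exact_mod_cast le_top))]
  refine (Finset.abs_sum_le_sum_abs _ _).trans (Finset.sum_le_sum fun k _ => ?_)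
  have hFk := hCF k i y hy
  rw [abs_mul, abs_mul, Nat.abs_cast]
  gcongr
  · exact mul_nonneg (Nat.cast_nonneg _) ((abs_nonneg _).trans hFk)
  · exact hCG (j - k) i y hy

end IteratedDerivsUniformlyBoundedOn

theorem abs_one_sub_sq_div_le_one {s y : ℝ} (h : y ^ 2 ≤ s) : |1 - y ^ 2 / s| ≤ 1 := by
  have hs : 0 ≤ s := (sq_nonneg y).trans h
  have h₀ : 0 ≤ y ^ 2 / s := div_nonneg (sq_nonneg y) hs
  have h₁ : y ^ 2 / s ≤ 1 := div_le_one_of_le₀ h hs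
  rw [abs_le]
  constructor <;> linarith

theorem deriv_one_sub_sq_div_pow (s : ℝ) (m : ℕ) :
    deriv (fun t : ℝ => (1 - t ^ 2 / s) ^ m) =
      fun t => -(2 * m / s) * (t * (1 - t ^ 2 / s) ^ (m - 1)) := by
  funext t
  exact ((((hasDerivAt_pow 2 t).div_const s).const_sub 1).pow m).deriv.trans (by ring)

theorem iteratedDerivsUniformlyBoundedOn_one_sub_sq_div_pow (a : ℝ) :
    IteratedDerivsUniformlyBoundedOn
      (fun q : {q : ℝ × ℕ // a ^ 2 ≤ q.1 ∧ (q.2 : ℝ) ≤ q.1} => fun t => (1 - t ^ 2 / q.1.1) ^ q.1.2)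
      (Icc (-a) a) := by
  intro j
  induction j using Nat.strong_induction_on with
  | _ j ih =>
  rcases j with _ | j
  · refine ⟨1, fun ⟨(s, m), hs, _⟩ y hy => ?_⟩
    have hy2 : y ^ 2 ≤ s := (sq_le_sq' hy.1 hy.2).trans hs
    rw [iteratedDeriv_zero, abs_pow]
    exact pow_le_one₀ (abs_nonneg _) (abs_one_sub_sq_div_le_one hy2)
  · obtain ⟨C₀, hC₀⟩ := ih j (by omega)
    obtain ⟨C₁, hC₁⟩ := ih (j - 1) (by omega)
    refine ⟨2 * (a * C₀ + j * C₁), fun ⟨(s, m), hs, hm⟩ y hy => ?_⟩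
    have hm' : ((m - 1 : ℕ) : ℝ) ≤ s := (Nat.cast_le.mpr (Nat.sub_le m 1)).trans hm
    have hA := hC₀ ⟨(s, m - 1), hs, hm'⟩ y hy
    have hB := hC₁ ⟨(s, m - 1), hs, hm'⟩ y hy
    have hs₀ : 0 ≤ s := (sq_nonneg a).trans hs
    have hc : |-(2 * m / s)| ≤ 2 := by
      rw [abs_neg, abs_of_nonneg (div_nonneg (by positivity) hs₀), mul_div_assoc]
      linarith [div_le_one_of_le₀ hm hs₀]
    rw [iteratedDeriv_succ', deriv_one_sub_sq_div_pow, iteratedDeriv_const_mul_field,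
      iteratedDeriv_fun_id_mul (by fun_prop), abs_mul]
    refine mul_le_mul hc ((abs_add_le _ _).trans ?_) (abs_nonneg _) zero_le_two
    rw [abs_mul, abs_mul, Nat.abs_cast]
    have hya : |y| ≤ a := abs_le.mpr hy
    gcongr
    exact (abs_nonneg y).trans hya

theorem deriv_exp_sq_mul_one_sub_sq_div_pow {n : ℕ} (hn : 1 ≤ n) :
    deriv (fun t : ℝ => Real.exp (t ^ 2) * (1 - t ^ 2 / n) ^ n) =
      fun t => (n : ℝ)⁻¹ * (-2 * t ^ 3 * Real.exp (t ^ 2) * (1 - t ^ 2 / n) ^ (n - 1)) := by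
  funext t
  have hn₀ : (n : ℝ) ≠ 0 := by positivity
  have hpow : (1 - t ^ 2 / n) ^ n = (1 - t ^ 2 / n) * (1 - t ^ 2 / n) ^ (n - 1) := by
    rw [← pow_succ', Nat.sub_add_cancel hn]
  have hf := (hasDerivAt_pow 2 t).exp.mul
    ((((hasDerivAt_pow 2 t).div_const (n : ℝ)).const_sub 1).pow n)
  refine hf.deriv.trans ?_
  rw [Pi.pow_apply, hpow]
  field_simp
  ring

theorem deriv_fn_small_general (ℓ : ℕ) (hℓ : 1 ≤ ℓ) (a : ℝ) :
    ∃ c : ℝ, ∀ n : ℕ, 1 ≤ n → a ^ 2 < (n : ℝ) → ∀ y : ℝ, |y| ≤ a →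
      |iteratedDeriv ℓ (fun t : ℝ => Real.exp (t ^ 2) * (1 - t ^ 2 / n) ^ n) y| ≤ c / n := by
  obtain ⟨j, rfl⟩ := Nat.exists_eq_add_of_le' hℓ
  obtain ⟨C, hC⟩ := ((IteratedDerivsUniformlyBoundedOn.const
    (f := fun t => -2 * t ^ 3 * Real.exp (t ^ 2)) (by fun_prop) isCompact_Icc).mul
    (iteratedDerivsUniformlyBoundedOn_one_sub_sq_div_pow a) (fun _ => by fun_prop)
    (fun _ => by fun_prop)) j
  refine ⟨C, fun n hn₁ hn y hy => ?_⟩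
  have hbound := hC ⟨((n : ℝ), n - 1), hn.le, Nat.cast_le.mpr (Nat.sub_le n 1)⟩ y (abs_le.mp hy)
  rw [iteratedDeriv_succ', deriv_exp_sq_mul_one_sub_sq_div_pow hn₁, iteratedDeriv_const_mul_field,
    abs_mul, abs_inv, Nat.abs_cast, inv_mul_eq_div]
  gcongr

/-- For `fₙ(y) = e^{y²}(1 - y²/n)ⁿ`, every derivative of order `ℓ ≥ 1` is `O(1/n)`
uniformly on `{|y| ≤ a}` (within the region `a² < n`). -/
theorem deriv_fn_small (ℓ : ℕ) (hℓ : 1 ≤ ℓ) (a : ℝ) (ha : 0 < a) :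
    ∃ c : ℝ, ∀ n : ℕ, 1 ≤ n → a ^ 2 < (n : ℝ) → ∀ y : ℝ, |y| ≤ a →
      |iteratedDeriv ℓ (fun t : ℝ => Real.exp (t ^ 2) * (1 - t ^ 2 / n) ^ n) y| ≤ c / n :=
  deriv_fn_small_general ℓ hℓ a
end

section
/- For fixed $\ell \in \mathbb{N}$ and any compact interval $I$, as $n \to \infty$: $\frac{d^{\ell}}{dy^{\ell}} \left(1 - \frac{y^2}{n}\right)^n = (-1)^{\ell} H_{\ell}(y)\, e^{-y^2} + O(1/n)$ uniformly for $y \in I$, where $H_\ell$ is the physicists' Hermite polynomial. -/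
/-!
Both sides extend to entire functions of `z`: `(1 - z²/n)ⁿ` and `exp (-z²)`. Writing
`w = z²/n`, the difference is `aⁿ - bⁿ` with `a = 1 - w`, `b = exp (-w)`; these agree up to
`O(|w|²)` and are bounded by `exp |w|`, so telescoping gives `|aⁿ - bⁿ| ≤ n e^{|z|²} |w|² =
O(1/n)` locally uniformly in `z`. Cauchy's estimate on unit circles transfers this bound to the
`ℓ`-th derivatives, and on the real axis the complex derivatives are the real ones.
-/

/-- The `ℓ`-th physicists' Hermite polynomial, defined by the Rodrigues formula
`H_ℓ(y) = (-1)^ℓ e^{y²} (d/dy)^ℓ e^{-y²}`. -/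
noncomputable def physHermite (ℓ : ℕ) (y : ℝ) : ℝ :=
  (-1 : ℝ) ^ ℓ * Real.exp (y ^ 2) * iteratedDeriv ℓ (fun t : ℝ => Real.exp (-t ^ 2)) y

open Complex Metric
open scoped Nat

theorem norm_pow_sub_pow_le_of_norm_le {R : Type*} [SeminormedCommRing R] [NormOneClass R]
    {a b : R} {K : ℝ} (ha : ‖a‖ ≤ K) (hb : ‖b‖ ≤ K) (n : ℕ) :
    ‖a ^ n - b ^ n‖ ≤ n * K ^ (n - 1) * ‖a - b‖ := by
  rw [← geom_sum₂_mul]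
  calc ‖(∑ i ∈ Finset.range n, a ^ i * b ^ (n - 1 - i)) * (a - b)‖
      ≤ (∑ i ∈ Finset.range n, ‖a ^ i * b ^ (n - 1 - i)‖) * ‖a - b‖ :=
        (norm_mul_le _ _).trans (by gcongr; exact norm_sum_le _ _)
    _ ≤ (∑ _i ∈ Finset.range n, K ^ (n - 1)) * ‖a - b‖ := by
        gcongr with i hi
        have hexp : i + (n - 1 - i) = n - 1 := by have := Finset.mem_range.1 hi; omega
        calc ‖a ^ i * b ^ (n - 1 - i)‖ ≤ ‖a‖ ^ i * ‖b‖ ^ (n - 1 - i) :=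
              (norm_mul_le _ _).trans (by gcongr <;> exact norm_pow_le _ _)
          _ ≤ K ^ i * K ^ (n - 1 - i) :=
              mul_le_mul (pow_le_pow_left₀ (norm_nonneg _) ha i)
                (pow_le_pow_left₀ (norm_nonneg _) hb _) (by positivity)
                (pow_nonneg ((norm_nonneg a).trans ha) i)
          _ = K ^ (n - 1) := by rw [← pow_add, hexp]
    _ = n * K ^ (n - 1) * ‖a - b‖ := by simp

theorem norm_one_sub_div_le_exp (u : ℂ) (n : ℕ) : ‖1 - u / n‖ ≤ Real.exp (‖u‖ / n) :=
  calc ‖1 - u / n‖ ≤ 1 + ‖u‖ / n := by simpa using norm_sub_le (1 : ℂ) (u / n)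
    _ ≤ Real.exp (‖u‖ / n) := by linarith [Real.add_one_le_exp (‖u‖ / n)]

theorem norm_one_sub_div_pow_le_exp (u : ℂ) (n : ℕ) : ‖(1 - u / n) ^ n‖ ≤ Real.exp ‖u‖ := by
  rcases n.eq_zero_or_pos with rfl | hn
  · simp [Real.one_le_exp (norm_nonneg u)]
  calc ‖(1 - u / n) ^ n‖ ≤ Real.exp (‖u‖ / n) ^ n := by
        rw [norm_pow]; gcongr; exact norm_one_sub_div_le_exp u n
    _ = Real.exp ‖u‖ := by rw [← Real.exp_nat_mul, mul_div_cancel₀ _ (by positivity)]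

theorem norm_one_sub_div_pow_sub_exp_neg_le_of_norm_le {u : ℂ} {n : ℕ} (hu : ‖u‖ ≤ n) :
    ‖(1 - u / n) ^ n - exp (-u)‖ ≤ Real.exp ‖u‖ * ‖u‖ ^ 2 / n := by
  rcases n.eq_zero_or_pos with rfl | hn
  · simp_all
  have hn' : (0 : ℝ) < n := by exact_mod_cast hn
  have hw : ‖u / n‖ = ‖u‖ / n := by rw [norm_div, norm_natCast]
  have hpow : exp (-u) = exp (-(u / n)) ^ n := by
    rw [← Complex.exp_nat_mul, mul_neg, mul_div_cancel₀ _ (by exact_mod_cast hn.ne')]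
  have hb : ‖exp (-(u / n))‖ ≤ Real.exp (‖u‖ / n) :=
    (norm_exp_le_exp_norm _).trans (by rw [norm_neg, hw])
  have hab : ‖(1 - u / n) - exp (-(u / n))‖ ≤ (‖u‖ / n) ^ 2 := by
    have hw1 : ‖-(u / n)‖ ≤ 1 := by rw [norm_neg, hw]; exact (div_le_one hn').2 hu
    rw [norm_sub_rev, show exp (-(u / n)) - (1 - u / n) = exp (-(u / n)) - 1 - -(u / n) by ring,
      ← hw, ← norm_neg (u / n)]
    exact norm_exp_sub_one_sub_id_le hw1
  rw [hpow]
  calc ‖(1 - u / n) ^ n - exp (-(u / n)) ^ n‖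
      ≤ n * Real.exp (‖u‖ / n) ^ (n - 1) * (‖u‖ / n) ^ 2 :=
        (norm_pow_sub_pow_le_of_norm_le (norm_one_sub_div_le_exp u n) hb n).trans (by gcongr)
    _ ≤ n * Real.exp (‖u‖ / n) ^ n * (‖u‖ / n) ^ 2 := by
        gcongr
        · exact Real.one_le_exp (by positivity)
        · omega
    _ = Real.exp ‖u‖ * ‖u‖ ^ 2 / n := by
        rw [← Real.exp_nat_mul, mul_div_cancel₀ _ hn'.ne']; field_simp

theorem norm_one_sub_div_pow_sub_exp_neg_le {u : ℂ} {M : ℝ} (hu : ‖u‖ ≤ M) {n : ℕ}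
    (hn : 0 < n) : ‖(1 - u / n) ^ n - exp (-u)‖ ≤ Real.exp M * (2 * M + M ^ 2) / n := by
  have hn' : (0 : ℝ) < n := by exact_mod_cast hn
  have hM : 0 ≤ M := (norm_nonneg u).trans hu
  rcases le_or_gt ‖u‖ n with hun | hun
  · calc _ ≤ Real.exp ‖u‖ * ‖u‖ ^ 2 / n := norm_one_sub_div_pow_sub_exp_neg_le_of_norm_le hun
      _ ≤ _ := by
          gcongr ?_ * ?_ / _
          · exact Real.exp_le_exp.2 hu
          · nlinarith [norm_nonneg u]
  · have hexp : ‖exp (-u)‖ ≤ Real.exp M :=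
      (norm_exp_le_exp_norm _).trans (Real.exp_le_exp.2 (by rwa [norm_neg]))
    calc _ ≤ Real.exp M + Real.exp M := (norm_sub_le _ _).trans <|
          add_le_add ((norm_one_sub_div_pow_le_exp u n).trans (Real.exp_le_exp.2 hu)) hexp
      _ ≤ _ := by
          rw [le_div_iff₀ hn']
          nlinarith [mul_pos (Real.exp_pos M) (sub_pos.2 (hun.trans_le hu)),
            mul_nonneg (Real.exp_pos M).le (sq_nonneg M)]

theorem iteratedDeriv_eq_re_of_ofReal_eq {f : ℝ → ℝ} {F : ℂ → ℂ} (hF : Differentiable ℂ F)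
    (hfF : ∀ t : ℝ, (f t : ℂ) = F t) (m : ℕ) (y : ℝ) :
    iteratedDeriv m f y = (iteratedDeriv m F y).re := by
  obtain rfl : f = fun t : ℝ => (F t).re := funext fun t => by rw [← hfF, ofReal_re]
  induction m generalizing y with
  | zero => simp
  | succ m ih =>
    rw [iteratedDeriv_succ, iteratedDeriv_succ, funext ih]
    exact ((hF.contDiff (n := ⊤).differentiable_iteratedDeriv m
      (by exact_mod_cast WithTop.coe_lt_top _)) y).hasDerivAt.real_of_complex.deriv

theorem abs_iteratedDeriv_le_of_forall_mem_sphere {f : ℝ → ℝ} {F : ℂ → ℂ}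
    (hF : Differentiable ℂ F) (hfF : ∀ t : ℝ, (f t : ℂ) = F t) (m : ℕ) (y : ℝ) {C : ℝ}
    (hC : ∀ z ∈ sphere (y : ℂ) 1, ‖F z‖ ≤ C) :
    |iteratedDeriv m f y| ≤ m ! * C := by
  rw [iteratedDeriv_eq_re_of_ofReal_eq hF hfF]
  calc _ ≤ ‖iteratedDeriv m F y‖ := abs_re_le_norm _
    _ ≤ m ! * C / 1 ^ m :=
        norm_iteratedDeriv_le_of_forall_mem_sphere_norm_le m one_pos hF.diffContOnCl hC
    _ = m ! * C := by simp

theorem neg_one_pow_mul_physHermite_mul_exp (ℓ : ℕ) (y : ℝ) :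
    (-1 : ℝ) ^ ℓ * physHermite ℓ y * Real.exp (-y ^ 2) =
      iteratedDeriv ℓ (fun t : ℝ => Real.exp (-t ^ 2)) y := by
  have hsign : (-1 : ℝ) ^ ℓ * (-1) ^ ℓ = 1 := by rw [← mul_pow]; norm_num
  have hexp : Real.exp (y ^ 2) * Real.exp (-y ^ 2) = 1 := by rw [← Real.exp_add]; simp
  unfold physHermite
  linear_combination (Real.exp (y ^ 2) * Real.exp (-y ^ 2) *
    iteratedDeriv ℓ (fun t : ℝ => Real.exp (-t ^ 2)) y) * hsign +
    iteratedDeriv ℓ (fun t : ℝ => Real.exp (-t ^ 2)) y * hexp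

/-- Uniformly on compact intervals,
`(d/dy)^ℓ (1 - y²/n)ⁿ = (-1)^ℓ H_ℓ(y) e^{-y²} + O(1/n)`. -/
theorem iteratedDeriv_tendsto_hermite (ℓ : ℕ) (A B : ℝ) :
    ∃ C : ℝ, ∀ n : ℕ, 1 ≤ n → ∀ y ∈ Set.Icc A B,
      |iteratedDeriv ℓ (fun t : ℝ => (1 - t ^ 2 / n) ^ n) y -
          (-1 : ℝ) ^ ℓ * physHermite ℓ y * Real.exp (-y ^ 2)| ≤ C / n := by
  set M := (max |A| |B| + 1) ^ 2
  refine ⟨ℓ ! * (Real.exp M * (2 * M + M ^ 2)), fun n hn y hy => ?_⟩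
  have hsphere (z : ℂ) (hz : z ∈ sphere (y : ℂ) 1) : ‖z ^ 2‖ ≤ M := by
    have hzy := norm_sub_norm_le z y
    rw [mem_sphere_iff_norm.1 hz, norm_real, Real.norm_eq_abs] at hzy
    rw [norm_pow]
    exact pow_le_pow_left₀ (norm_nonneg z) (by linarith [abs_le_max_abs_abs hy.1 hy.2]) 2
  rw [neg_one_pow_mul_physHermite_mul_exp, ← iteratedDeriv_fun_sub (by fun_prop) (by fun_prop),
    mul_div_assoc]
  exact abs_iteratedDeriv_le_of_forall_mem_sphere
    (F := fun z => (1 - z ^ 2 / n) ^ n - exp (-z ^ 2)) (by fun_prop) (fun t => by push_cast; rfl)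
    ℓ y fun z hz => norm_one_sub_div_pow_sub_exp_neg_le (hsphere z hz) hn
end

section
/- Let $p(x) = (x^2-1)^n$ and fix $\ell \ge 1$. Then for each root $y^*$ of the physicists' Hermite polynomial $H_\ell$, there exists for all sufficiently large $n$ a root $x_n$ of $p^{(\ell)}$ with $\sqrt{n}\, x_n \to y^*$ as $n \to \infty$. -/
/-!
Differentiating `(x² - 1)ⁿ` repeatedly gives `D^k (x² - 1)ⁿ = n^{k/2} q_k(1/n, √n x) (x² - 1)^{n-k}`
for a polynomial `q_k(ε, y)` whose specialisation `q_k(0, ·)` satisfies the Hermite recursion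
`H_{k+1} = 2y H_k - H_k'`. Since `H_ℓ' = 2ℓ H_{ℓ-1}` and consecutive Hermite polynomials have no
common root, every root `y*` of `H_ℓ` is simple, so `H_ℓ(y* - t) H_ℓ(y* + t) < 0` for small `t > 0`.
This strict inequality survives replacing `ε = 0` by `ε = 1/n` for large `n`, and for `|y| < √n`
the factor `(y²/n - 1)^{n-ℓ}` does not change sign, so the intermediate value theorem gives a
root of `D^ℓ (x² - 1)ⁿ` in `((y* - t)/√n, (y* + t)/√n)`. Taking the nearest root for each `n`
gives the sequence.
-/

open Polynomial Filter

/-- The polynomial `q_k(ε, y)`, with outer variable `y` and coefficient variable `ε`; the recursion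
is what differentiating `n^{k/2} q_k(1/n, √n x) (x² - 1)^{n-k}` once more produces. -/
noncomputable def derivFactor : ℕ → ℝ[X][X]
  | 0 => 1
  | k + 1 => (C X * X ^ 2 - 1) * derivative (derivFactor k)
      + C (2 - 2 * (k : ℝ[X]) * X) * X * derivFactor k

noncomputable def derivFactorAt (e : ℝ) (k : ℕ) : ℝ[X] := (derivFactor k).map (evalRingHom e)

lemma derivFactorAt_zero (e : ℝ) : derivFactorAt e 0 = 1 := by
  simp [derivFactorAt, derivFactor]

lemma derivFactorAt_succ (e : ℝ) (k : ℕ) :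
    derivFactorAt e (k + 1) = (C e * X ^ 2 - 1) * derivative (derivFactorAt e k)
      + C (2 - 2 * (k : ℝ) * e) * X * derivFactorAt e k := by
  simp [derivFactorAt, derivFactor, derivative_map]

lemma continuous_eval_derivFactorAt (k : ℕ) (y : ℝ) :
    Continuous fun e : ℝ => (derivFactorAt e k).eval y := by
  simp_rw [derivFactorAt, map_evalRingHom_eval]
  exact Polynomial.continuous _

lemma iterate_derivative_X_sq_sub_one_pow {n k : ℕ} (hk : k ≤ n) :
    derivative^[k] ((X ^ 2 - 1 : ℝ[X]) ^ n)
      = C (√n ^ k) * (derivFactorAt (1 / n) k).comp (C √n * X) * (X ^ 2 - 1) ^ (n - k) := by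
  induction k with
  | zero => simp [derivFactorAt_zero]
  | succ k ih =>
    have hs0 : √(n : ℝ) ≠ 0 := (Real.sqrt_pos.2 (by exact_mod_cast (by omega : 0 < n))).ne'
    have hs : √n ^ 2 = (n : ℝ) := Real.sq_sqrt n.cast_nonneg
    obtain ⟨m, hm⟩ : ∃ m, n - k = m + 1 := ⟨n - (k + 1), by omega⟩
    have hcast : ((m + 1 : ℕ) : ℝ) = n - k := by rw [← hm, Nat.cast_sub (by omega)]
    rw [Function.iterate_succ_apply', ih (by omega), hm, show n - (k + 1) = m by omega,
      derivFactorAt_succ]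
    apply Polynomial.funext
    intro x
    simp only [derivative_mul, derivative_pow, derivative_comp, derivative_C, derivative_X,
      derivative_sub, derivative_one, eval_add, eval_mul, eval_sub, eval_pow, eval_comp, eval_C,
      eval_X, eval_one, zero_mul, zero_add, eval_zero, Nat.cast_ofNat, Nat.add_sub_cancel, hcast]
    set s := √(n : ℝ)
    rw [← hs]
    field_simp
    ring

noncomputable def physHermitePoly (k : ℕ) : ℝ[X] := derivFactorAt 0 k

lemma physHermitePoly_zero : physHermitePoly 0 = 1 := derivFactorAt_zero 0

lemma physHermitePoly_succ (k : ℕ) :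
    physHermitePoly (k + 1) = 2 * X * physHermitePoly k - derivative (physHermitePoly k) := by
  rw [physHermitePoly, derivFactorAt_succ, physHermitePoly]
  simp only [map_ofNat, C_0, mul_zero, zero_mul, sub_zero]
  ring

lemma derivative_physHermitePoly_succ (k : ℕ) :
    derivative (physHermitePoly (k + 1)) = 2 * (k + 1 : ℝ[X]) * physHermitePoly k := by
  induction k with
  | zero => simp [physHermitePoly_succ, physHermitePoly_zero]
  | succ k ih =>
    rw [physHermitePoly_succ (k + 1), derivative_sub, ih]
    simp only [derivative_mul, derivative_ofNat, derivative_X, derivative_add, derivative_natCast,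
      derivative_one, ih]
    push_cast
    linear_combination (-(2 * ((k : ℝ[X]) + 1))) * physHermitePoly_succ k

lemma not_isRoot_physHermitePoly_of_isRoot_succ {k : ℕ} {y : ℝ}
    (h : (physHermitePoly (k + 1)).IsRoot y) : ¬ (physHermitePoly k).IsRoot y := by
  induction k with
  | zero => simp [physHermitePoly_zero]
  | succ k ih =>
    intro hk
    apply ih hk
    have hrec := congrArg (eval y) (physHermitePoly_succ (k + 1))
    rw [derivative_physHermitePoly_succ] at hrec
    simp only [IsRoot.def] at h hk ⊢
    simp only [eval_sub, eval_mul, eval_ofNat, eval_X, eval_add, eval_natCast, eval_one, h,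
      hk] at hrec
    have hk' : 2 * ((k : ℝ) + 1) * eval y (physHermitePoly k) = 0 := by linarith
    exact (mul_eq_zero.1 hk').resolve_left (by positivity)

lemma eval_derivative_physHermitePoly_ne_zero {k : ℕ} {y : ℝ}
    (h : (physHermitePoly k).IsRoot y) : (derivative (physHermitePoly k)).eval y ≠ 0 := by
  cases k with
  | zero => simp [physHermitePoly_zero] at h
  | succ k =>
    rw [derivative_physHermitePoly_succ, eval_mul]
    exact mul_ne_zero (by simp; positivity) (not_isRoot_physHermitePoly_of_isRoot_succ h)

lemma iteratedDeriv_exp_neg_sq (k : ℕ) :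
    iteratedDeriv k (fun t : ℝ => Real.exp (-t ^ 2))
      = fun y => (-1) ^ k * (physHermitePoly k).eval y * Real.exp (-y ^ 2) := by
  induction k with
  | zero => simp [physHermitePoly_zero]
  | succ k ih =>
    rw [iteratedDeriv_succ, ih]
    funext y
    have hexp : HasDerivAt (fun y : ℝ => Real.exp (-y ^ 2)) (Real.exp (-y ^ 2) * -(2 * y)) y := by
      simpa using (hasDerivAt_pow 2 y).neg.exp
    have hderiv : HasDerivAt (fun y => (-1) ^ k * (physHermitePoly k).eval y * Real.exp (-y ^ 2))
        ((-1) ^ k * (derivative (physHermitePoly k)).eval y * Real.exp (-y ^ 2)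
          + (-1) ^ k * (physHermitePoly k).eval y * (Real.exp (-y ^ 2) * -(2 * y))) y :=
      (((physHermitePoly k).hasDerivAt y).const_mul _).mul hexp
    rw [hderiv.deriv, physHermitePoly_succ]
    simp only [eval_sub, eval_mul, eval_ofNat, eval_X]
    ring

lemma physHermite_eq_eval (k : ℕ) (y : ℝ) : physHermite k y = (physHermitePoly k).eval y := by
  rw [physHermite, iteratedDeriv_exp_neg_sq]
  have hexp : Real.exp (y ^ 2) * Real.exp (-y ^ 2) = 1 := by rw [← Real.exp_add]; simp
  have hsign : ((-1 : ℝ) ^ k) ^ 2 = 1 := by rw [← pow_mul, mul_comm, pow_mul, neg_one_sq, one_pow]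
  linear_combination (physHermitePoly k).eval y * (Real.exp (y ^ 2) * Real.exp (-y ^ 2)) * hsign
    + (physHermitePoly k).eval y * hexp

lemma exists_mul_eval_neg_of_isRoot {p : ℝ[X]} {z : ℝ} (hz : p.IsRoot z)
    (hd : (derivative p).eval z ≠ 0) {ε : ℝ} (hε : 0 < ε) :
    ∃ t, 0 < t ∧ t < ε ∧ p.eval (z - t) * p.eval (z + t) < 0 := by
  set q := p /ₘ (X - C z)
  have hpq : (X - C z) * q = p := mul_divByMonic_eq_iff_isRoot.2 hz
  have hqz : q.eval z ≠ 0 := by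
    simpa [← hpq, derivative_mul] using hd
  have hcont : Continuous fun t => q.eval (z - t) * q.eval (z + t) := by fun_prop
  have h0 : 0 < q.eval (z - 0) * q.eval (z + 0) := by simpa using mul_self_pos.2 hqz
  have hpos := continuousAt_const.eventually_lt hcont.continuousAt h0
  obtain ⟨t, hqt, ht⟩ :=
    ((hpos.filter_mono nhdsWithin_le_nhds).and (Ioo_mem_nhdsGT hε)).exists
  refine ⟨t, ht.1, ht.2, ?_⟩
  have hp : ∀ x, p.eval x = (x - z) * q.eval x := fun x => by rw [← hpq]; simp
  rw [hp, hp]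
  nlinarith [mul_pos ht.1 ht.1]

lemma exists_mem_Ioo_eq_zero_of_mul_neg {f : ℝ → ℝ} {a b : ℝ} (hab : a ≤ b)
    (hf : ContinuousOn f (Set.Icc a b)) (h : f a * f b < 0) : ∃ r ∈ Set.Ioo a b, f r = 0 := by
  rcases mul_neg_iff.1 h with ⟨ha, hb⟩ | ⟨ha, hb⟩
  · exact intermediate_value_Ioo' hab hf ⟨hb, ha⟩
  · exact intermediate_value_Ioo hab hf ⟨ha, hb⟩

lemma mul_eval_iterate_derivative_X_sq_sub_one_pow_neg {n k : ℕ} (hk : k ≤ n) {a b : ℝ}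
    (ha : a ^ 2 < n) (hb : b ^ 2 < n)
    (hab : (derivFactorAt (1 / n) k).eval a * (derivFactorAt (1 / n) k).eval b < 0) :
    (derivative^[k] ((X ^ 2 - 1 : ℝ[X]) ^ n)).eval (a / √n)
      * (derivative^[k] ((X ^ 2 - 1 : ℝ[X]) ^ n)).eval (b / √n) < 0 := by
  have hn : (0 : ℝ) < n := (sq_nonneg a).trans_lt ha
  have hs : 0 < √(n : ℝ) := Real.sqrt_pos.2 hn
  have hsq : ∀ y : ℝ, (y / √n) ^ 2 - 1 = (y ^ 2 - n) / n := fun y => by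
    rw [div_pow, Real.sq_sqrt hn.le]; field_simp
  have hfactor : 0 < ((a / √n) ^ 2 - 1) * ((b / √n) ^ 2 - 1) := by
    rw [hsq, hsq]
    exact mul_pos_of_neg_of_neg (div_neg_of_neg_of_pos (by linarith) hn)
      (div_neg_of_neg_of_pos (by linarith) hn)
  simp only [iterate_derivative_X_sq_sub_one_pow hk, eval_mul, eval_C, eval_pow, eval_comp,
    eval_X, eval_sub, eval_one, mul_div_cancel₀ _ hs.ne']
  calc _ = √n ^ k * √n ^ k * (((a / √n) ^ 2 - 1) * ((b / √n) ^ 2 - 1)) ^ (n - k)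
        * ((derivFactorAt (1 / n) k).eval a * (derivFactorAt (1 / n) k).eval b) := by
        rw [mul_pow]; ring
    _ < 0 := mul_neg_of_pos_of_neg (mul_pos (by positivity) (pow_pos hfactor _)) hab

lemma eventually_exists_root_near_of_isRoot_physHermitePoly {ℓ : ℕ} {y : ℝ}
    (hy : (physHermitePoly ℓ).IsRoot y) {ε : ℝ} (hε : 0 < ε) :
    ∀ᶠ n : ℕ in atTop, ∃ r ∈ (derivative^[ℓ] ((X ^ 2 - 1 : ℝ[X]) ^ n)).roots.toFinset,
      dist (√n * r) y < ε := by
  obtain ⟨t, ht, htε, hsign⟩ :=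
    exists_mul_eval_neg_of_isRoot hy (eval_derivative_physHermitePoly_ne_zero hy) hε
  have hlim (x : ℝ) : Tendsto (fun n : ℕ => (derivFactorAt (1 / n) ℓ).eval x) atTop
      (nhds ((physHermitePoly ℓ).eval x)) :=
    ((continuous_eval_derivFactorAt ℓ x).tendsto 0).comp tendsto_one_div_atTop_nhds_zero_nat
  have hlarge (x : ℝ) : ∀ᶠ n : ℕ in atTop, x ^ 2 < n :=
    tendsto_natCast_atTop_atTop.eventually_gt_atTop _
  filter_upwards [((hlim _).mul (hlim _)).eventually (eventually_lt_nhds hsign),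
    eventually_ge_atTop ℓ, hlarge (y - t), hlarge (y + t)] with n hV hℓn ha hb
  have hP := mul_eval_iterate_derivative_X_sq_sub_one_pow_neg hℓn ha hb hV
  have hs : 0 < √(n : ℝ) := Real.sqrt_pos.2 ((sq_nonneg _).trans_lt ha)
  obtain ⟨r, ⟨hr₁, hr₂⟩, hr⟩ := exists_mem_Ioo_eq_zero_of_mul_neg
    (div_le_div_of_nonneg_right (by linarith) hs.le) (Polynomial.continuous _).continuousOn hP
  refine ⟨r, Multiset.mem_toFinset.2 (mem_roots'.2 ⟨fun h0 => ?_, hr⟩), ?_⟩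
  · simp [h0] at hP
  · rw [div_lt_iff₀' hs] at hr₁
    rw [lt_div_iff₀' hs] at hr₂
    rw [Real.dist_eq, abs_sub_lt_iff]
    constructor <;> linarith

lemma exists_seq_tendsto_of_eventually_exists_mem {α β : Type*} [Nonempty α]
    [PseudoMetricSpace β] {s : ℕ → Finset α} {f : ℕ → α → β} {y : β}
    (h : ∀ ε > 0, ∀ᶠ n in atTop, ∃ r ∈ s n, dist (f n r) y < ε) :
    ∃ (N : ℕ) (x : ℕ → α), (∀ n, N ≤ n → x n ∈ s n) ∧
      Tendsto (fun n => f n (x n)) atTop (nhds y) := by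
  have hnearest (n : ℕ) : ∃ x : α, (s n).Nonempty →
      x ∈ s n ∧ ∀ r ∈ s n, dist (f n x) y ≤ dist (f n r) y := by
    by_cases hne : (s n).Nonempty
    · obtain ⟨x, hx, hmin⟩ := (s n).exists_min_image (fun r => dist (f n r) y) hne
      exact ⟨x, fun _ => ⟨hx, hmin⟩⟩
    · exact ⟨Classical.arbitrary α, fun h => absurd h hne⟩
  choose x hx using hnearest
  obtain ⟨N, hN⟩ := (h 1 one_pos).exists_forall_of_atTop
  refine ⟨N, x, fun n hn => ?_, Metric.tendsto_nhds.2 fun ε hε => ?_⟩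
  · obtain ⟨r, hr, -⟩ := hN n hn
    exact (hx n ⟨r, hr⟩).1
  · filter_upwards [h ε hε] with n ⟨r, hr, hrε⟩
    exact ((hx n ⟨r, hr⟩).2 r hr).trans_lt hrε

theorem roots_of_derivs_of_pow_converge_general (ℓ : ℕ) (ystar : ℝ)
    (hroot : physHermite ℓ ystar = 0) :
    ∃ (N : ℕ) (x : ℕ → ℝ),
      (∀ n : ℕ, N ≤ n →
        Polynomial.eval (x n)
          ((Polynomial.derivative)^[ℓ] ((Polynomial.X ^ 2 - 1 : Polynomial ℝ) ^ n)) = 0) ∧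
      Tendsto (fun n : ℕ => Real.sqrt n * x n) atTop (nhds ystar) := by
  rw [physHermite_eq_eval] at hroot
  obtain ⟨N, x, hroots, hlim⟩ := exists_seq_tendsto_of_eventually_exists_mem
    fun ε hε => eventually_exists_root_near_of_isRoot_physHermitePoly hroot hε
  exact ⟨N, x, fun n hn => (mem_roots'.1 (Multiset.mem_toFinset.1 (hroots n hn))).2, hlim⟩

/-- For each root `y*` of `H_ℓ`, for all sufficiently large `n` the `ℓ`-th derivative of
`(x² - 1)ⁿ` has a root `xₙ` with `√n · xₙ → y*`. -/
theorem roots_of_derivs_of_pow_converge (ℓ : ℕ) (hℓ : 1 ≤ ℓ) (ystar : ℝ)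
    (hroot : physHermite ℓ ystar = 0) :
    ∃ (N : ℕ) (x : ℕ → ℝ),
      (∀ n : ℕ, N ≤ n →
        Polynomial.eval (x n)
          ((Polynomial.derivative)^[ℓ] ((Polynomial.X ^ 2 - 1 : Polynomial ℝ) ^ n)) = 0) ∧
      Tendsto (fun n : ℕ => Real.sqrt n * x n) atTop (nhds ystar) :=
  roots_of_derivs_of_pow_converge_general ℓ ystar hroot
end

section
/- Let $A$ be a real symmetric $n \times n$ matrix with distinct eigenvalues $\lambda_1 < \dots < \lambda_n$ and orthonormal eigenvectors $u_1,\dots,u_n$. Let $v \in \mathbb{R}^n$ be a unit vector with $w_i = \langle v, u_i \rangle \ne 0$ for all $i$, and $P_v = vv^T$. Then $z \notin \{\lambda_1,\dots,\lambda_n\}$ is an eigenvalue of $(I - P_v) A (I - P_v)$ restricted to $v^{\perp}$ if and only if $\sum_{i=1}^n \frac{w_i^2}{z - \lambda_i} = 0$. -/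
open Matrix Finset

/-- Secular equation for the compression of a symmetric matrix to the hyperplane `v^⊥`:
with `A uᵢ = λᵢ uᵢ`, `λ₁ < … < λₙ`, `(uᵢ)` orthonormal, `v` a unit vector with
`wᵢ = ⟨v, uᵢ⟩ ≠ 0`, a number `z ∉ {λᵢ}` is an eigenvalue of `(I - vvᵀ) A (I - vvᵀ)`
restricted to `v^⊥` iff `∑ᵢ wᵢ²/(z - λᵢ) = 0`. -/
theorem symmetric_random_projection_secular (n : ℕ)
    (A : Matrix (Fin n) (Fin n) ℝ) (hA : A.IsSymm)
    (lam : Fin n → ℝ) (hlam : StrictMono lam)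
    (u : Fin n → (Fin n → ℝ))
    (huortho : ∀ i j : Fin n, u i ⬝ᵥ u j = if i = j then (1 : ℝ) else 0)
    (heig : ∀ i : Fin n, A *ᵥ u i = lam i • u i)
    (v : Fin n → ℝ) (hv : v ⬝ᵥ v = 1)
    (w : Fin n → ℝ) (hw : ∀ i : Fin n, w i = v ⬝ᵥ u i) (hw0 : ∀ i : Fin n, w i ≠ 0)
    (z : ℝ) (hz : z ∉ Set.range lam) :
    (∃ q : Fin n → ℝ, q ≠ 0 ∧ q ⬝ᵥ v = 0 ∧
        ((1 - Matrix.vecMulVec v v) * A * (1 - Matrix.vecMulVec v v)) *ᵥ q = z • q) ↔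
      ∑ i : Fin n, (w i) ^ 2 / (z - lam i) = 0 := by
  have hne : ∀ j : Fin n, lam j - z ≠ 0 := by
    intro j h
    exact hz ⟨j, by linarith⟩
  have hne' : ∀ j : Fin n, z - lam j ≠ 0 := by
    intro j h
    exact hz ⟨j, by linarith⟩
  -- completeness of the orthonormal family
  set U : Matrix (Fin n) (Fin n) ℝ := Matrix.of u with hU
  have h1 : U * Uᵀ = 1 := by
    ext i j
    have := huortho i j
    simpa [Matrix.mul_apply, Matrix.one_apply, dotProduct, hU] using this
  have h2 : Uᵀ * U = 1 := mul_eq_one_comm.mp h1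
  have hcomp : ∀ (x : Fin n → ℝ) (a : Fin n), ∑ j, (x ⬝ᵥ u j) * u j a = x a := by
    intro x a
    calc ∑ j, (x ⬝ᵥ u j) * u j a
        = ∑ j, ∑ k, x k * u j k * u j a := by
          simp [dotProduct, Finset.sum_mul]
      _ = ∑ k, x k * ∑ j, u j k * u j a := by
          rw [Finset.sum_comm]
          simp [Finset.mul_sum, mul_assoc]
      _ = ∑ k, x k * (Uᵀ * U) k a := by
          simp [Matrix.mul_apply, hU]
      _ = x a := by rw [h2]; simp [Matrix.one_apply]
  -- dot with v via coefficients
  have hvdot : ∀ y : Fin n → ℝ, v ⬝ᵥ y = ∑ j, w j * (u j ⬝ᵥ y) := by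
    intro y
    calc v ⬝ᵥ y = ∑ a, v a * y a := rfl
      _ = ∑ a, (∑ j, (v ⬝ᵥ u j) * u j a) * y a :=
          Finset.sum_congr rfl fun a _ => by rw [hcomp v a]
      _ = ∑ j, w j * (u j ⬝ᵥ y) := by
          simp only [Finset.sum_mul]
          rw [Finset.sum_comm]
          refine Finset.sum_congr rfl fun j _ => ?_
          rw [hw j]
          simp only [dotProduct, Finset.mul_sum]
          exact Finset.sum_congr rfl fun a _ => by ring
  have hsumw : ∑ j, w j ^ 2 = 1 := by
    have h := hvdot v
    rw [hv] at h
    calc ∑ j, w j ^ 2 = ∑ j, w j * (u j ⬝ᵥ v) :=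
          Finset.sum_congr rfl fun j _ => by rw [dotProduct_comm, ← hw j]; ring
      _ = 1 := h.symm
  -- eigen dot
  have hAu : ∀ (j : Fin n) (x : Fin n → ℝ), u j ⬝ᵥ (A *ᵥ x) = lam j * (u j ⬝ᵥ x) := by
    intro j x
    rw [dotProduct_mulVec]
    have hvm : u j ᵥ* A = lam j • u j := by
      rw [← Matrix.mulVec_transpose, hA.eq, heig j]
    rw [hvm, smul_dotProduct, smul_eq_mul]
  -- projection action
  have hPv : ∀ x : Fin n → ℝ, (1 - Matrix.vecMulVec v v) *ᵥ x = x - (v ⬝ᵥ x) • v := by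
    intro x
    have hPx : Matrix.vecMulVec v v *ᵥ x = (v ⬝ᵥ x) • v := by
      funext a
      simp only [Matrix.mulVec, Matrix.vecMulVec_apply, dotProduct, Pi.smul_apply,
        smul_eq_mul, Finset.sum_mul]
      exact Finset.sum_congr rfl fun j _ => by ring
    rw [Matrix.sub_mulVec, Matrix.one_mulVec, hPx]
  have hM : ∀ x : Fin n → ℝ, x ⬝ᵥ v = 0 →
      ((1 - Matrix.vecMulVec v v) * A * (1 - Matrix.vecMulVec v v)) *ᵥ x
        = A *ᵥ x - (v ⬝ᵥ (A *ᵥ x)) • v := by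
    intro x hx
    have hx' : v ⬝ᵥ x = 0 := by rwa [dotProduct_comm]
    rw [← Matrix.mulVec_mulVec, ← Matrix.mulVec_mulVec, hPv x, hx', zero_smul, sub_zero, hPv]
  constructor
  · rintro ⟨q, hq0, hqv, heq⟩
    have hqv' : v ⬝ᵥ q = 0 := by rwa [dotProduct_comm]
    have hkey : ∀ j, lam j * (u j ⬝ᵥ q) - (v ⬝ᵥ (A *ᵥ q)) * w j = z * (u j ⬝ᵥ q) := by
      intro j
      have h := congrArg (fun y => u j ⬝ᵥ y) heq
      rw [hM q hqv, dotProduct_sub, hAu j q, dotProduct_smul, dotProduct_smul,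
        show u j ⬝ᵥ v = w j by rw [hw j, dotProduct_comm]] at h
      simpa [smul_eq_mul] using h
    have hμ0 : v ⬝ᵥ (A *ᵥ q) ≠ 0 := by
      intro h0
      apply hq0
      have hcz : ∀ j, u j ⬝ᵥ q = 0 := by
        intro j
        have hk := hkey j
        rw [h0, zero_mul, sub_zero] at hk
        have h3 : (lam j - z) * (u j ⬝ᵥ q) = 0 := by linear_combination hk
        rcases mul_eq_zero.mp h3 with h | h
        · exact absurd h (hne j)
        · exact h
      funext a
      have h4 := hcomp q a
      have h5 : ∀ j ∈ Finset.univ, (q ⬝ᵥ u j) * u j a = 0 := by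
        intro j _
        rw [dotProduct_comm, hcz j, zero_mul]
      rw [Finset.sum_congr rfl h5, Finset.sum_const_zero] at h4
      exact h4.symm
    have hcval : ∀ j, u j ⬝ᵥ q = (v ⬝ᵥ (A *ᵥ q)) * w j / (lam j - z) := by
      intro j
      have hk := hkey j
      field_simp [hne j]
      linear_combination hk
    have h0 : ∑ j, w j * (u j ⬝ᵥ q) = 0 := by
      have h := hvdot q
      rw [hqv'] at h
      exact h.symm
    have hsplit : ∑ j, w j * (u j ⬝ᵥ q)
        = -(v ⬝ᵥ (A *ᵥ q)) * ∑ j, w j ^ 2 / (z - lam j) := by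
      rw [Finset.mul_sum]
      refine Finset.sum_congr rfl fun j _ => ?_
      rw [hcval j, show z - lam j = -(lam j - z) by ring, div_neg]
      field_simp [hne j]
    rw [hsplit] at h0
    rcases mul_eq_zero.mp h0 with h | h
    · exact absurd (neg_eq_zero.mp h) hμ0
    · exact h
  · intro hsum
    have hn : 0 < n := by
      by_contra h
      push_neg at h
      interval_cases n
      simp [dotProduct] at hv
    set q : Fin n → ℝ := fun a => ∑ j, (w j / (lam j - z)) * u j a with hq
    have hquj : ∀ j, q ⬝ᵥ u j = w j / (lam j - z) := by
      intro j
      simp only [dotProduct, hq, Finset.sum_mul]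
      rw [Finset.sum_comm]
      have h5 : ∀ i, ∑ a, w i / (lam i - z) * u i a * u j a
          = w i / (lam i - z) * (if i = j then (1:ℝ) else 0) := by
        intro i
        rw [← huortho i j]
        simp [dotProduct, Finset.mul_sum, mul_assoc]
      simp only [h5]
      simp
    have hujq : ∀ j, u j ⬝ᵥ q = w j / (lam j - z) := by
      intro j; rw [dotProduct_comm]; exact hquj j
    have hqv : q ⬝ᵥ v = 0 := by
      rw [dotProduct_comm, hvdot q]
      have h6 : ∀ j ∈ Finset.univ, w j * (u j ⬝ᵥ q) = -(w j ^ 2 / (z - lam j)) := by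
        intro j _
        rw [hujq j, show z - lam j = -(lam j - z) by ring, div_neg, neg_neg]
        ring
      rw [Finset.sum_congr rfl h6, Finset.sum_neg_distrib, hsum, neg_zero]
    have hq0 : q ≠ 0 := by
      intro h
      have i0 : Fin n := ⟨0, hn⟩
      have h1 := hquj i0
      rw [h, zero_dotProduct] at h1
      rcases div_eq_zero_iff.mp h1.symm with h2 | h2
      · exact hw0 i0 h2
      · exact hne i0 h2
    have hμ : v ⬝ᵥ (A *ᵥ q) = 1 := by
      rw [hvdot]
      have h7 : ∀ j ∈ Finset.univ, w j * (u j ⬝ᵥ (A *ᵥ q))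
          = w j ^ 2 + (-z) * (w j ^ 2 / (z - lam j)) := by
        intro j _
        rw [hAu j q, hujq j, show z - lam j = -(lam j - z) by ring, div_neg]
        field_simp [hne j]
        ring
      rw [Finset.sum_congr rfl h7, Finset.sum_add_distrib, ← Finset.mul_sum, hsum, hsumw]
      ring
    refine ⟨q, hq0, hqv, ?_⟩
    have hdots : ∀ j, (((1 - Matrix.vecMulVec v v) * A * (1 - Matrix.vecMulVec v v)) *ᵥ q) ⬝ᵥ u j
        = (z • q) ⬝ᵥ u j := by
      intro j
      rw [dotProduct_comm, hM q hqv, dotProduct_sub, hAu j q, dotProduct_smul, hμ]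
      have hujv : u j ⬝ᵥ v = w j := by rw [hw j, dotProduct_comm]
      rw [hujv, hujq j, smul_dotProduct, hquj j, smul_eq_mul, smul_eq_mul, one_mul]
      field_simp [hne j]
      ring
    funext a
    rw [← hcomp (((1 - Matrix.vecMulVec v v) * A * (1 - Matrix.vecMulVec v v)) *ᵥ q) a,
       ← hcomp (z • q) a]
    exact Finset.sum_congr rfl fun j _ => by rw [hdots j]
end
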